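/- Let $\delta>0$ and let $K:\mathbb{R}^3\times\mathbb{R}^3\to\mathbb{C}$ satisfy $|K(x,y)|\lesssim \langle x\rangle^{-1}\langle y\rangle^{-1}\langle |x|-|y|\rangle^{-2-\delta}$. Then $T_K$ is bounded on $L^p(\mathbb{R}^3)$ for all $1\le p\le\infty$. -/

import Mathlib

/-!
Peetre's inequality `⟨b⟩ ≤ √2 ⟨a⟩ ⟨a - b⟩` trades one power of `⟨|x| - |y|⟩` for a power of
`⟨|y|⟩`, so the kernel is bounded by `√2 C ⟨y⟩⁻² ⟨|x| - |y|⟩^{-1-δ}`. In polar coordinates the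
factor `⟨y⟩⁻²` absorbs the Jacobian `|y|²`, leaving the integrable function `⟨s⟩^{-1-δ}` on the
line; hence `sup_x ∫ |K(x,y)| dy < ∞`, and by the symmetry of the bound also
`sup_y ∫ |K(x,y)| dx < ∞`. Schur's test then gives boundedness on every `L^p`, `1 ≤ p ≤ ∞`.
-/

open MeasureTheory Real
open scoped ENNReal NNReal

noncomputable section

abbrev E3 := EuclideanSpace ℝ (Fin 3)

/-- Japanese bracket `⟨x⟩ = (1+|x|²)^{1/2}` of a point of `ℝ³`. -/
def jb (x : E3) : ℝ := Real.sqrt (1 + ‖x‖ ^ 2)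

/-- Japanese bracket of a real number. -/
def jbR (s : ℝ) : ℝ := Real.sqrt (1 + s ^ 2)

section Schur

open Function

variable {α β : Type*} [MeasurableSpace α] [MeasurableSpace β] {μ : Measure α} {ν : Measure β}

theorem ENNReal.lintegral_mul_rpow_le {k g : β → ℝ≥0∞} (hk : AEMeasurable k ν)
    (hg : AEMeasurable g ν) {r : ℝ} (hr : 1 ≤ r) :
    (∫⁻ y, k y * g y ∂ν) ^ r ≤ (∫⁻ y, k y ∂ν) ^ (r - 1) * ∫⁻ y, k y * g y ^ r ∂ν := by
  rcases hr.eq_or_lt with rfl | hr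
  · simp
  set q := r.conjExponent
  have hrq : r.HolderConjugate q := .conjExponent hr
  have hr0 : 0 < r := hrq.pos
  have hq0 : 0 < q := hrq.symm.pos
  have holder : ∫⁻ y, k y * g y ∂ν ≤
      (∫⁻ y, k y * g y ^ r ∂ν) ^ (1 / r) * (∫⁻ y, k y ∂ν) ^ (1 / q) := by
    convert ENNReal.lintegral_mul_le_Lp_mul_Lq ν hrq (f := fun y ↦ k y ^ (1 / r) * g y)
      (g := fun y ↦ k y ^ (1 / q)) ((hk.pow_const _).mul hg) (hk.pow_const _) using 3 with y
    · rw [Pi.mul_apply, mul_right_comm, ← ENNReal.rpow_add_of_nonneg _ _ (by positivity)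
        (by positivity), one_div, one_div, hrq.inv_add_inv_eq_one, ENNReal.rpow_one]
    · simp_rw [ENNReal.mul_rpow_of_nonneg _ _ hr0.le, ← ENNReal.rpow_mul,
        one_div_mul_cancel hr0.ne', ENNReal.rpow_one]
    · simp_rw [← ENNReal.rpow_mul, one_div_mul_cancel hq0.ne', ENNReal.rpow_one]
  calc (∫⁻ y, k y * g y ∂ν) ^ r
      ≤ ((∫⁻ y, k y * g y ^ r ∂ν) ^ (1 / r) * (∫⁻ y, k y ∂ν) ^ (1 / q)) ^ r :=
        ENNReal.rpow_le_rpow holder hr0.le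
    _ = (∫⁻ y, k y ∂ν) ^ (r - 1) * ∫⁻ y, k y * g y ^ r ∂ν := by
        rw [ENNReal.mul_rpow_of_nonneg _ _ hr0.le, ← ENNReal.rpow_mul, ← ENNReal.rpow_mul,
          one_div_mul_cancel hr0.ne', ENNReal.rpow_one, one_div_mul_eq_div,
          hrq.div_conj_eq_sub_one, mul_comm]

theorem lintegral_rpow_lintegral_mul_le [SFinite μ] [SFinite ν] {k : α → β → ℝ≥0∞}
    (hk : Measurable (uncurry k)) {g : β → ℝ≥0∞} (hg : AEMeasurable g ν) {A : ℝ≥0∞}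
    (hrow : ∀ x, ∫⁻ y, k x y ∂ν ≤ A) (hcol : ∀ y, ∫⁻ x, k x y ∂μ ≤ A) {r : ℝ} (hr : 1 ≤ r) :
    ∫⁻ x, (∫⁻ y, k x y * g y ∂ν) ^ r ∂μ ≤ A ^ r * ∫⁻ y, g y ^ r ∂ν := by
  have hkg : AEMeasurable (uncurry fun x y ↦ k x y * g y ^ r) (μ.prod ν) :=
    hk.aemeasurable.mul ((hg.comp_quasiMeasurePreserving
      Measure.quasiMeasurePreserving_snd).pow_const r)
  calc ∫⁻ x, (∫⁻ y, k x y * g y ∂ν) ^ r ∂μ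
      ≤ ∫⁻ x, A ^ (r - 1) * ∫⁻ y, k x y * g y ^ r ∂ν ∂μ := by
        refine lintegral_mono fun x ↦ ?_
        grw [ENNReal.lintegral_mul_rpow_le hk.of_uncurry_left.aemeasurable hg hr, hrow x]
        linarith
    _ = A ^ (r - 1) * ∫⁻ y, (∫⁻ x, k x y ∂μ) * g y ^ r ∂ν := by
        rw [lintegral_const_mul'' _ hkg.lintegral_prod_right, lintegral_lintegral_swap hkg]
        simp_rw [lintegral_mul_const _ hk.of_uncurry_right]
    _ ≤ A ^ (r - 1) * ∫⁻ y, A * g y ^ r ∂ν := by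
        gcongr with y
        exact hcol y
    _ = A ^ r * ∫⁻ y, g y ^ r ∂ν := by
        rw [lintegral_const_mul'' _ (hg.pow_const r), ← mul_assoc]
        nth_rw 2 [← ENNReal.rpow_one A]
        rw [← ENNReal.rpow_add_of_nonneg _ _ (by linarith) zero_le_one, sub_add_cancel]

theorem eLpNorm_integral_mul_le_of_lintegral_enorm_le {𝕜 : Type*} [RCLike 𝕜] [SFinite μ]
    [SFinite ν] {K : α → β → 𝕜} (hK : Measurable (uncurry K)) {A : ℝ≥0∞}
    (hrow : ∀ x, ∫⁻ y, ‖K x y‖ₑ ∂ν ≤ A) (hcol : ∀ y, ∫⁻ x, ‖K x y‖ₑ ∂μ ≤ A) {p : ℝ≥0∞}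
    (hp : 1 ≤ p) {f : β → 𝕜} (hf : AEStronglyMeasurable f ν) :
    eLpNorm (fun x ↦ ∫ y, K x y * f y ∂ν) p μ ≤ A * eLpNorm f p ν := by
  have hTf (x : α) : ‖∫ y, K x y * f y ∂ν‖ₑ ≤ ∫⁻ y, ‖K x y‖ₑ * ‖f y‖ₑ ∂ν := by
    simpa only [enorm_mul] using enorm_integral_le_lintegral_enorm (fun y ↦ K x y * f y)
  rcases eq_or_ne p ∞ with rfl | hp_top
  · simp only [eLpNorm_exponent_top]
    refine essSup_le_of_ae_le _ (.of_forall fun x ↦ ?_)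
    calc ‖∫ y, K x y * f y ∂ν‖ₑ ≤ ∫⁻ y, ‖K x y‖ₑ * ‖f y‖ₑ ∂ν := hTf x
      _ ≤ ∫⁻ y, ‖K x y‖ₑ * eLpNormEssSup f ν ∂ν :=
        lintegral_mono_ae ((enorm_ae_le_eLpNormEssSup f ν).mono fun y hy ↦ by gcongr)
      _ = (∫⁻ y, ‖K x y‖ₑ ∂ν) * eLpNormEssSup f ν :=
        lintegral_mul_const _ hK.of_uncurry_left.enorm
      _ ≤ A * eLpNormEssSup f ν := by grw [hrow x]
  have hp0 : p ≠ 0 := (zero_lt_one.trans_le hp).ne'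
  set r := p.toReal
  have hr : 1 ≤ r := by simpa using ENNReal.toReal_mono hp_top hp
  rw [eLpNorm_eq_lintegral_rpow_enorm_toReal hp0 hp_top,
    eLpNorm_eq_lintegral_rpow_enorm_toReal hp0 hp_top]
  calc (∫⁻ x, ‖∫ y, K x y * f y ∂ν‖ₑ ^ r ∂μ) ^ (1 / r)
      ≤ (∫⁻ x, (∫⁻ y, ‖K x y‖ₑ * ‖f y‖ₑ ∂ν) ^ r ∂μ) ^ (1 / r) := by
        gcongr with x
        exact hTf x
    _ ≤ (A ^ r * ∫⁻ y, ‖f y‖ₑ ^ r ∂ν) ^ (1 / r) := by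
        gcongr
        exact lintegral_rpow_lintegral_mul_le hK.enorm hf.enorm hrow hcol hr
    _ = A * (∫⁻ y, ‖f y‖ₑ ^ r ∂ν) ^ (1 / r) := by
        rw [ENNReal.mul_rpow_of_nonneg _ _ (by positivity), ← ENNReal.rpow_mul,
          mul_one_div_cancel (by positivity), ENNReal.rpow_one]

end Schur

section Polar

open Set Metric Module

variable {E : Type*} [NormedAddCommGroup E] [NormedSpace ℝ E] [FiniteDimensional ℝ E]
  [MeasurableSpace E] [BorelSpace E] (μ : Measure E) [μ.IsAddHaarMeasure]

theorem lintegral_fun_norm_addHaar [Nontrivial E] {g : ℝ → ℝ≥0∞} (hg : Measurable g) :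
    ∫⁻ x, g ‖x‖ ∂μ =
      μ.toSphere univ * ∫⁻ r in Ioi (0 : ℝ), ENNReal.ofReal (r ^ (finrank ℝ E - 1)) * g r := by
  have hgm : Measurable fun p : sphere (0 : E) 1 × Ioi (0 : ℝ) ↦ g p.2 := by fun_prop
  calc ∫⁻ x, g ‖x‖ ∂μ = ∫⁻ x : ({0}ᶜ : Set E), g ‖(x : E)‖ ∂μ.comap (↑) := by
        rw [lintegral_subtype_comap (measurableSet_singleton _).compl fun x : E ↦ g ‖x‖,
          restrict_compl_singleton]
    _ = ∫⁻ p : sphere (0 : E) 1 × Ioi (0 : ℝ), g p.2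
          ∂μ.toSphere.prod (.volumeIoiPow (finrank ℝ E - 1)) := by
        rw [← (μ.measurePreserving_homeomorphUnitSphereProd).lintegral_comp hgm]
        simp only [homeomorphUnitSphereProd_apply_snd_coe]
    _ = μ.toSphere univ * ∫⁻ r : Ioi (0 : ℝ), g r ∂.volumeIoiPow (finrank ℝ E - 1) := by
        rw [lintegral_prod _ hgm.aemeasurable]
        dsimp only
        rw [lintegral_const, mul_comm]
    _ = _ := by
        rw [Measure.volumeIoiPow, lintegral_withDensity_eq_lintegral_mul _ (by fun_prop)
          (by fun_prop), ← lintegral_subtype_comap measurableSet_Ioi]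
        rfl

theorem lintegral_ofReal_inv_one_add_sq_mul_le (hE : finrank ℝ E = 3) {w : ℝ → ℝ≥0∞}
    (hw : Measurable w) :
    ∫⁻ x, ENNReal.ofReal ((1 + ‖x‖ ^ 2)⁻¹) * w ‖x‖ ∂μ ≤ μ.toSphere univ * ∫⁻ r, w r := by
  have : Nontrivial E := Module.nontrivial_of_finrank_eq_succ hE
  rw [lintegral_fun_norm_addHaar μ (g := fun r ↦ ENNReal.ofReal ((1 + r ^ 2)⁻¹) * w r)
    (by fun_prop), hE]
  gcongr μ.toSphere univ * ?_
  calc ∫⁻ r in Ioi 0, ENNReal.ofReal (r ^ 2) * (ENNReal.ofReal ((1 + r ^ 2)⁻¹) * w r)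
      ≤ ∫⁻ r in Ioi 0, w r := by
        refine lintegral_mono fun r ↦ ?_
        rw [← mul_assoc, ← ENNReal.ofReal_mul (by positivity)]
        refine mul_le_of_le_one_left' (ENNReal.ofReal_le_one.2 ?_)
        rw [mul_inv_le_iff₀ (by positivity)]
        linarith
    _ ≤ ∫⁻ r, w r := setLIntegral_le_lintegral _ _

end Polar

section JapaneseBracket

lemma jbR_pos (s : ℝ) : 0 < jbR s := Real.sqrt_pos.2 (by positivity)

lemma sq_jbR (s : ℝ) : jbR s ^ 2 = 1 + s ^ 2 := Real.sq_sqrt (by positivity)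

lemma jbR_sub_comm (a b : ℝ) : jbR (a - b) = jbR (b - a) := by
  rw [jbR, jbR, ← neg_sub, neg_sq]

lemma measurable_jbR : Measurable jbR := by
  unfold jbR
  fun_prop

lemma jbR_le_sqrt_two_mul_mul (a b : ℝ) : jbR b ≤ √2 * jbR a * jbR (a - b) := by
  rw [jbR, jbR, jbR, ← Real.sqrt_mul zero_le_two, ← Real.sqrt_mul (by positivity)]
  exact Real.sqrt_le_sqrt (by nlinarith [sq_nonneg (a - b), sq_nonneg a, sq_nonneg (a * (a - b))])

lemma inv_jbR_mul_inv_jbR_mul_rpow_le (c a b : ℝ) :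
    (jbR a)⁻¹ * (jbR b)⁻¹ * jbR (a - b) ^ (-(c + 1)) ≤
      √2 * ((1 + b ^ 2)⁻¹ * jbR (a - b) ^ (-c)) := by
  have hb := jbR_pos b
  have hab := jbR_pos (a - b)
  have ha := jbR_pos a
  have hpeetre : (jbR a)⁻¹ ≤ √2 * jbR (a - b) * (jbR b)⁻¹ :=
    calc (jbR a)⁻¹ = jbR b * (jbR a)⁻¹ * (jbR b)⁻¹ := by field_simp
      _ ≤ √2 * jbR a * jbR (a - b) * (jbR a)⁻¹ * (jbR b)⁻¹ := by
        gcongr ?_ * _ * _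
        exact jbR_le_sqrt_two_mul_mul a b
      _ = √2 * jbR (a - b) * (jbR b)⁻¹ := by field_simp
  have hpow : jbR (a - b) * jbR (a - b) ^ (-(c + 1)) = jbR (a - b) ^ (-c) := by
    rw [mul_comm, ← Real.rpow_add_one hab.ne']
    ring_nf
  calc (jbR a)⁻¹ * (jbR b)⁻¹ * jbR (a - b) ^ (-(c + 1))
      ≤ √2 * jbR (a - b) * (jbR b)⁻¹ * (jbR b)⁻¹ * jbR (a - b) ^ (-(c + 1)) := by gcongr
    _ = √2 * ((jbR b ^ 2)⁻¹ * (jbR (a - b) * jbR (a - b) ^ (-(c + 1)))) := by ring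
    _ = √2 * ((1 + b ^ 2)⁻¹ * jbR (a - b) ^ (-c)) := by rw [hpow, sq_jbR]

lemma integrable_jbR_rpow_neg {c : ℝ} (hc : 1 < c) : Integrable fun s ↦ jbR s ^ (-c) := by
  refine (integrable_rpow_neg_one_add_norm_sq (E := ℝ) (μ := volume) (r := c)
    (by simpa using hc)).congr (.of_forall fun s ↦ ?_)
  dsimp only
  rw [jbR, Real.sqrt_eq_rpow, ← Real.rpow_mul (by positivity), Real.norm_eq_abs, sq_abs]
  ring_nf

end JapaneseBracket

section KernelMajorant

def kernelMajorant (δ : ℝ) (x y : E3) : ℝ :=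
  (jb x)⁻¹ * (jb y)⁻¹ * jbR (‖x‖ - ‖y‖) ^ (-(2 + δ))

lemma kernelMajorant_comm (δ : ℝ) (x y : E3) : kernelMajorant δ x y = kernelMajorant δ y x := by
  rw [kernelMajorant, kernelMajorant, jbR_sub_comm, mul_comm (jb x)⁻¹]

lemma kernelMajorant_le (δ : ℝ) (x y : E3) :
    kernelMajorant δ x y ≤ √2 * ((1 + ‖y‖ ^ 2)⁻¹ * jbR (‖x‖ - ‖y‖) ^ (-(1 + δ))) := by
  rw [kernelMajorant, show -(2 + δ) = -(1 + δ + 1) by ring]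
  exact inv_jbR_mul_inv_jbR_mul_rpow_le (1 + δ) ‖x‖ ‖y‖

lemma kernelMajorant_nonneg (δ : ℝ) (x y : E3) : 0 ≤ kernelMajorant δ x y := by
  have := jbR_pos (‖x‖ - ‖y‖)
  unfold kernelMajorant jb
  positivity

lemma lintegral_kernelMajorant_le (δ : ℝ) (x : E3) :
    ∫⁻ y, ENNReal.ofReal (kernelMajorant δ x y) ≤
      ENNReal.ofReal √2 * ((volume : Measure E3).toSphere Set.univ *
        ∫⁻ s, ENNReal.ofReal (jbR s ^ (-(1 + δ)))) := by
  set w : ℝ → ℝ≥0∞ := fun s ↦ ENNReal.ofReal (jbR s ^ (-(1 + δ)))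
  have hw : Measurable w := (measurable_jbR.pow_const _).ennreal_ofReal
  calc ∫⁻ y, ENNReal.ofReal (kernelMajorant δ x y)
      ≤ ∫⁻ y, ENNReal.ofReal √2 * (ENNReal.ofReal ((1 + ‖y‖ ^ 2)⁻¹) * w (‖x‖ - ‖y‖)) := by
        refine lintegral_mono fun y ↦ ?_
        rw [← ENNReal.ofReal_mul (by positivity), ← ENNReal.ofReal_mul (by positivity)]
        exact ENNReal.ofReal_le_ofReal (kernelMajorant_le δ x y)
    _ ≤ ENNReal.ofReal √2 * ((volume : Measure E3).toSphere Set.univ * ∫⁻ r, w (‖x‖ - r)) := by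
        rw [lintegral_const_mul' _ _ ENNReal.ofReal_ne_top]
        gcongr
        exact lintegral_ofReal_inv_one_add_sq_mul_le volume (finrank_euclideanSpace_fin)
          (hw.comp (measurable_const.sub measurable_id))
    _ = _ := by rw [lintegral_sub_left_eq_self w]

end KernelMajorant

/-- If `|K(x,y)| ≲ ⟨x⟩⁻¹⟨y⟩⁻¹⟨|x|-|y|⟩^{-2-δ}` for some `δ > 0`, then `T_K` is bounded on
`L^p(ℝ³)` for all `1 ≤ p ≤ ∞`. -/
theorem kernel_extra_decay_Lp_bounded (δ : ℝ) (hδ : 0 < δ) (K : E3 → E3 → ℂ)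
    (hmeas : Measurable (Function.uncurry K))
    (hK : ∃ C : ℝ, ∀ x y : E3, ‖K x y‖ ≤
      C * (jb x)⁻¹ * (jb y)⁻¹ * (jbR (‖x‖ - ‖y‖)) ^ (-(2 + δ))) :
    ∀ p : ℝ≥0∞, 1 ≤ p → ∃ C : ℝ≥0, ∀ f : E3 → ℂ, MemLp f p volume →
      eLpNorm (fun x : E3 => ∫ y : E3, K x y * f y) p volume ≤ C * eLpNorm f p volume := by
  obtain ⟨C, hC⟩ := hK
  set M := ENNReal.ofReal √2 * ((volume : Measure E3).toSphere Set.univ *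
    ∫⁻ s, ENNReal.ofReal (jbR s ^ (-(1 + δ))))
  have hM : M ≠ ⊤ := ENNReal.mul_ne_top ENNReal.ofReal_ne_top <| ENNReal.mul_ne_top
    (measure_ne_top _ _) (integrable_jbR_rpow_neg (by linarith)).lintegral_lt_top.ne
  have hpt (x y : E3) : ‖K x y‖ₑ ≤ ENNReal.ofReal C * ENNReal.ofReal (kernelMajorant δ x y) := by
    rw [← ofReal_norm, ← ENNReal.ofReal_mul' (kernelMajorant_nonneg δ x y)]
    exact ENNReal.ofReal_le_ofReal ((hC x y).trans_eq (by simp only [kernelMajorant, mul_assoc]))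
  have hrow (x : E3) : ∫⁻ y, ‖K x y‖ₑ ≤ ENNReal.ofReal C * M := by
    grw [lintegral_mono (hpt x), lintegral_const_mul' _ _ ENNReal.ofReal_ne_top,
      lintegral_kernelMajorant_le]
  have hcol (y : E3) : ∫⁻ x, ‖K x y‖ₑ ≤ ENNReal.ofReal C * M := by
    grw [lintegral_mono (hpt · y), lintegral_const_mul' _ _ ENNReal.ofReal_ne_top]
    simp_rw [kernelMajorant_comm δ _ y]
    grw [lintegral_kernelMajorant_le]
  intro p hp
  refine ⟨(ENNReal.ofReal C * M).toNNReal, fun f hf ↦ ?_⟩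
  rw [ENNReal.coe_toNNReal (ENNReal.mul_ne_top ENNReal.ofReal_ne_top hM)]
  exact eLpNorm_integral_mul_le_of_lintegral_enorm_le hmeas hrow hcol hp hf.1
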